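/- arXiv:1211.0330 — 2 statements merged into one kernel-verified Lean document; each statement's English description precedes it below -/
import Mathlib

section
/- Let A be an m × n matrix over the complex numbers. If A is a (q,k,t)-design matrix with k ≤ nt, then rank(A) ≥ n − 6n³t³/k³. -/
/-!
Write `a i j = ‖A i j‖²`, `n` for the number of columns and `r i` for the number of nonzero
entries of row `i`. Counting the incidences of column `j` with the other columns gives
`∑_{i ∈ supp j} r i ≤ |supp j| + n t`, so by Cauchy–Schwarz `Z j = ∑_{i ∈ supp j} 1 / r i` is at
least `k² / (k + n t)`, and `u i j = 1 / (r i Z j)` on the support of `A` is a column-stochastic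
matrix with row sums at most `σ' = (k + n t) / k²`.

Let `σ = 6 n² t² / k³ > σ'` and maximise `σ ∑ᵢ log wᵢ - ∑ⱼ log (∑ᵢ wᵢ a i j)` over `(0,1]^m`.
Gibbs' inequality against `u` bounds this potential by a constant plus `(σ - σ') log wᵢ` for
every `i`, so a maximiser `w` exists, and its first-order condition in `wᵢ` (one-sided, from the
left, since `wᵢ` may be `1`) says that
`B = diag(√w) A diag(c^(-1/2))`, with `c j = ∑ᵢ wᵢ a i j`, has unit columns and
`∑ⱼ ‖B i j‖² ≤ σ` for every row `i`.

Then `M = Bᴴ B` has trace `n`, and since two columns of `B` share at most `t` nonzero rows,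
Cauchy–Schwarz bounds the off-diagonal mass `∑_{j ≠ j'} ‖M j j'‖²` by `t σ n`. The spectral bound
`(tr M)² ≤ rank M · ∑ ‖M j j'‖²` gives `rank A ≥ rank B ≥ n² / (n + t σ n) ≥ n - t σ n`.
-/

/-- An `m × n` matrix `A` over a field is a `(q,k,t)`-design matrix if every row has
support of size at most `q`, every column has support of size at least `k`, and the
supports of any two distinct columns intersect in at most `t` coordinates. -/
def IsDesignMatrix {F : Type*} [Field F] {m n : ℕ}
    (A : Matrix (Fin m) (Fin n) F) (q k t : ℕ) : Prop :=
  (∀ i : Fin m, {j : Fin n | A i j ≠ 0}.ncard ≤ q) ∧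
  (∀ j : Fin n, k ≤ {i : Fin m | A i j ≠ 0}.ncard) ∧
  (∀ j₁ j₂ : Fin n, j₁ ≠ j₂ →
    ({i : Fin m | A i j₁ ≠ 0} ∩ {i : Fin m | A i j₂ ≠ 0}).ncard ≤ t)

open Finset Matrix Filter Topology
open scoped ComplexOrder

namespace Matrix

variable {𝕜 m n : Type*} [RCLike 𝕜] [Fintype m] [Fintype n]

theorem trace_conjTranspose_mul_self_eq_sum (B : Matrix m n 𝕜) :
    (Bᴴ * B).trace = ∑ i, ∑ j, ((‖B i j‖ ^ 2 : ℝ) : 𝕜) := by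
  rw [trace, Finset.sum_comm]
  refine Finset.sum_congr rfl fun j _ => Finset.sum_congr rfl fun i _ => ?_
  simp [RCLike.conj_mul]

variable [DecidableEq n] {A : Matrix n n 𝕜}

theorem IsHermitian.trace_mul_self (hA : A.IsHermitian) :
    (A * A).trace = ∑ i, ((hA.eigenvalues i ^ 2 : ℝ) : 𝕜) := by
  conv_lhs => rw [hA.spectral_theorem, ← map_mul, Unitary.conjStarAlgAut_apply, trace_mul_cycle,
    Unitary.coe_star_mul_self, one_mul, diagonal_mul_diagonal, trace_diagonal]
  simp [sq]

theorem IsHermitian.sq_re_trace_le_rank_mul (hA : A.IsHermitian) :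
    RCLike.re A.trace ^ 2 ≤ A.rank * ∑ i, ∑ j, ‖A i j‖ ^ 2 := by
  have hsq : ∑ i, ∑ j, ‖A i j‖ ^ 2 = ∑ i, hA.eigenvalues i ^ 2 := by
    have := trace_conjTranspose_mul_self_eq_sum A
    rw [hA.eq, hA.trace_mul_self] at this
    exact_mod_cast this.symm
  set μ := hA.eigenvalues
  have hre : RCLike.re A.trace = ∑ i with μ i ≠ 0, μ i := by
    simp [hA.trace_eq_sum_eigenvalues, μ, Finset.sum_filter_ne_zero]
  rw [hsq, hre, hA.rank_eq_card_non_zero_eigs, Fintype.card_subtype]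
  calc _ ≤ #{i | μ i ≠ 0} * ∑ i with μ i ≠ 0, μ i ^ 2 := sq_sum_le_card_mul_sum_sq
    _ ≤ _ := by
        refine mul_le_mul_of_nonneg_left ?_ (Nat.cast_nonneg _)
        exact Finset.sum_le_sum_of_subset_of_nonneg (filter_subset _ _) fun i _ _ => sq_nonneg _

end Matrix

section Gram

variable {𝕜 ι κ : Type*} [RCLike 𝕜] [Fintype ι]

theorem norm_conjTranspose_mul_self_apply_sq_le (B : Matrix ι κ 𝕜) (j j' : κ) :
    ‖(Bᴴ * B) j j'‖ ^ 2 ≤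
      ({i | B i j ≠ 0} ∩ {i | B i j' ≠ 0}).ncard * ∑ i, ‖B i j‖ ^ 2 * ‖B i j'‖ ^ 2 := by
  classical
  set s : Finset ι := {i | B i j ≠ 0 ∧ B i j' ≠ 0}
  have hs : ({i | B i j ≠ 0} ∩ {i | B i j' ≠ 0}).ncard = #s := by
    rw [← Set.ncard_coe_finset]; congr 1; ext; simp [s]
  have hsum : (Bᴴ * B) j j' = ∑ i ∈ s, star (B i j) * B i j' := by
    rw [mul_apply, Finset.sum_filter_of_ne]
    · rfl
    · intro i _ h
      exact ⟨fun h' => h (by simp [h']), fun h' => h (by simp [h'])⟩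
  calc ‖(Bᴴ * B) j j'‖ ^ 2 ≤ (∑ i ∈ s, ‖B i j‖ * ‖B i j'‖) ^ 2 := by
        rw [hsum]
        gcongr
        exact (norm_sum_le _ _).trans_eq (by simp)
    _ ≤ #s * ∑ i ∈ s, (‖B i j‖ * ‖B i j'‖) ^ 2 := sq_sum_le_card_mul_sum_sq
    _ ≤ _ := by
        rw [hs]
        refine mul_le_mul_of_nonneg_left ?_ (Nat.cast_nonneg _)
        simp_rw [mul_pow]
        exact sum_le_sum_of_subset_of_nonneg (subset_univ _) fun i _ _ => by positivity

variable [Fintype κ] [DecidableEq κ]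

theorem sum_sum_erase_norm_conjTranspose_mul_self_sq_le (B : Matrix ι κ 𝕜) {σ : ℝ} {t : ℕ}
    (hrow : ∀ i, ∑ j, ‖B i j‖ ^ 2 ≤ σ)
    (hint : ∀ j j', j ≠ j' → ({i | B i j ≠ 0} ∩ {i | B i j' ≠ 0}).ncard ≤ t) :
    ∑ j, ∑ j' ∈ univ.erase j, ‖(Bᴴ * B) j j'‖ ^ 2 ≤ t * σ * ∑ i, ∑ j, ‖B i j‖ ^ 2 := by
  set p : ι → κ → ℝ := fun i j => ‖B i j‖ ^ 2
  have hpair : ∀ j, ∀ j' ∈ univ.erase j, ‖(Bᴴ * B) j j'‖ ^ 2 ≤ t * ∑ i, p i j * p i j' :=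
    fun j j' hj' => (norm_conjTranspose_mul_self_apply_sq_le B j j').trans <|
      mul_le_mul_of_nonneg_right (by exact_mod_cast hint j j' (ne_of_mem_erase hj').symm)
        (by positivity)
  calc _ ≤ ∑ j, ∑ j', t * ∑ i, p i j * p i j' := sum_le_sum fun j _ =>
        (sum_le_sum (hpair j)).trans <|
          sum_le_sum_of_subset_of_nonneg (subset_univ _) fun _ _ _ => by positivity
    _ = t * ∑ i, (∑ j, p i j) * ∑ j, p i j := by
        simp_rw [sum_mul_sum, mul_sum]
        exact (sum_congr rfl fun _ _ => sum_comm).trans sum_comm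
    _ ≤ t * ∑ i, σ * ∑ j, p i j := by
        gcongr with i
        exact hrow i
    _ = t * σ * ∑ i, ∑ j, p i j := by simp only [mul_sum, mul_assoc]

theorem card_sub_le_rank_of_unit_columns (B : Matrix ι κ 𝕜) {σ : ℝ} {t : ℕ}
    (hcol : ∀ j, ∑ i, ‖B i j‖ ^ 2 = 1) (hrow : ∀ i, ∑ j, ‖B i j‖ ^ 2 ≤ σ)
    (hint : ∀ j j', j ≠ j' → ({i | B i j ≠ 0} ∩ {i | B i j' ≠ 0}).ncard ≤ t) :
    (Fintype.card κ : ℝ) - t * σ * Fintype.card κ ≤ B.rank := by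
  set n : ℝ := (Fintype.card κ : ℝ)
  set M := Bᴴ * B
  have hdiag : ∀ j, M j j = 1 := fun j => by
    simp only [M, mul_apply, conjTranspose_apply, RCLike.star_def, RCLike.conj_mul]
    exact_mod_cast hcol j
  set off := ∑ j, ∑ j' ∈ univ.erase j, ‖M j j'‖ ^ 2
  have hfrob : ∑ j, ∑ j', ‖M j j'‖ ^ 2 = n + off := by
    rw [show n = ∑ j, ‖M j j‖ ^ 2 by simp [hdiag, n], ← sum_add_distrib]
    exact sum_congr rfl fun j _ => (add_sum_erase _ _ (mem_univ j)).symm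
  have hoff : off ≤ t * σ * n := by
    have := sum_sum_erase_norm_conjTranspose_mul_self_sq_le B hrow hint
    rwa [sum_comm, Fintype.sum_congr _ _ hcol, sum_const, card_univ, nsmul_one] at this
  have hrank := (isHermitian_conjTranspose_mul_self B).sq_re_trace_le_rank_mul
  rw [show RCLike.re M.trace = n by simp [trace, hdiag, n], hfrob,
    rank_conjTranspose_mul_self] at hrank
  have hoff₀ : 0 ≤ off := by positivity
  have : n - off ≤ B.rank := by nlinarith [(Nat.cast_nonneg B.rank : (0 : ℝ) ≤ B.rank)]
  linarith

end Gram

section Scaling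

open Real

theorem HasDerivAt.nonneg_of_eventually_le {f : ℝ → ℝ} {f' x : ℝ} (hf : HasDerivAt f f' x)
    (hmax : ∀ᶠ y in 𝓝[<] x, f y ≤ f x) : 0 ≤ f' := by
  refine ge_of_tendsto ((hasDerivAt_iff_tendsto_slope.mp hf).mono_left (nhdsLT_le_nhdsNE x)) ?_
  filter_upwards [hmax, self_mem_nhdsWithin] with y hy (hyx : y < x)
  rw [slope_def_field]
  exact div_nonneg_of_nonpos (by linarith) (by linarith)

variable {ι κ : Type*} [Fintype ι]

theorem sum_mul_log_div_le_log_sum {p x : ι → ℝ} (hp : ∀ i, 0 ≤ p i) (hp1 : ∑ i, p i = 1)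
    (hx : ∀ i, 0 ≤ x i) (hpx : ∀ i, p i ≠ 0 → 0 < x i) :
    ∑ i, p i * log (x i / p i) ≤ log (∑ i, x i) := by
  set S := ∑ i, x i
  obtain ⟨i₀, hi₀⟩ : ∃ i, p i ≠ 0 := by
    by_contra! h
    simp [h] at hp1
  have hS : 0 < S := sum_pos' (fun i _ => hx i) ⟨i₀, mem_univ _, hpx i₀ hi₀⟩
  -- Gibbs: termwise `log y ≤ y - 1` with `y = x i / (p i * S)`.
  have hterm : ∀ i, p i * log (x i / p i) - p i * log S ≤ x i / S - p i := by
    intro i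
    rcases (hp i).eq_or_lt with h | h
    · rw [← h]
      simpa using div_nonneg (hx i) hS.le
    · have hxi := hpx i h.ne'
      rw [← mul_sub, ← log_div (by positivity) hS.ne']
      calc p i * log (x i / p i / S) ≤ p i * (x i / p i / S - 1) :=
            mul_le_mul_of_nonneg_left (log_le_sub_one_of_pos (by positivity)) h.le
        _ = x i / S - p i := by field_simp
  have hsum := sum_le_sum fun i (_ : i ∈ univ) => hterm i
  rw [sum_sub_distrib, sum_sub_distrib, ← sum_mul, hp1, ← sum_div, div_self hS.ne'] at hsum
  linarith

def weightedColSum (a : ι → κ → ℝ) (w : ι → ℝ) (j : κ) : ℝ := ∑ i, w i * a i j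

noncomputable def colNormalize (a : ι → κ → ℝ) (w : ι → ℝ) (i : ι) (j : κ) : ℝ :=
  w i * a i j / weightedColSum a w j

theorem weightedColSum_pos {a : ι → κ → ℝ} (ha : ∀ i j, 0 ≤ a i j) {w : ι → ℝ}
    (hw : ∀ i, 0 < w i) {j : κ} (hj : ∃ i, a i j ≠ 0) : 0 < weightedColSum a w j := by
  obtain ⟨i, hi⟩ := hj
  exact sum_pos' (fun i _ => mul_nonneg (hw i).le (ha i j))
    ⟨i, mem_univ i, mul_pos (hw i) ((ha i j).lt_of_ne' hi)⟩

theorem sum_colNormalize_eq_one {a : ι → κ → ℝ} {w : ι → ℝ} {j : κ}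
    (hj : 0 < weightedColSum a w j) : ∑ i, colNormalize a w i j = 1 := by
  simp only [colNormalize, ← sum_div]
  exact div_self hj.ne'

variable [Fintype κ]

noncomputable def scalingPotential (σ : ℝ) (a : ι → κ → ℝ) (w : ι → ℝ) : ℝ :=
  σ * ∑ i, log (w i) - ∑ j, log (weightedColSum a w j)

structure IsScalingCertificate (a u : ι → κ → ℝ) (σ : ℝ) : Prop where
  nonneg : ∀ i j, 0 ≤ u i j
  pos_of_ne_zero : ∀ i j, u i j ≠ 0 → 0 < a i j
  sum_col : ∀ j, ∑ i, u i j = 1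
  sum_row_le : ∀ i, ∑ j, u i j ≤ σ

theorem IsScalingCertificate.exists_ne_zero {a u : ι → κ → ℝ} {σ : ℝ}
    (hu : IsScalingCertificate a u σ) (j : κ) : ∃ i, a i j ≠ 0 := by
  obtain ⟨i, -, hi⟩ := exists_ne_zero_of_sum_ne_zero ((hu.sum_col j).trans_ne one_ne_zero)
  exact ⟨i, (hu.pos_of_ne_zero i j hi).ne'⟩

variable {a : ι → κ → ℝ}

theorem scalingPotential_le {u : ι → κ → ℝ} {σ σ' : ℝ} (ha : ∀ i j, 0 ≤ a i j)
    (hu : IsScalingCertificate a u σ') (hσ : σ' ≤ σ) {w : ι → ℝ} (hw : ∀ i, w i ∈ Set.Ioc 0 1)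
    (i₀ : ι) :
    scalingPotential σ a w ≤ -∑ j, ∑ i, u i j * log (a i j / u i j) + (σ - σ') * log (w i₀) := by
  classical
  have hlog : ∀ i, log (w i) ≤ 0 := fun i => log_nonpos (hw i).1.le (hw i).2
  have hcol : ∀ j, ∑ i, u i j * log (w i) + ∑ i, u i j * log (a i j / u i j) ≤
      log (weightedColSum a w j) := by
    intro j
    rw [← sum_add_distrib]
    refine le_of_eq_of_le (sum_congr rfl fun i _ => ?_) <| sum_mul_log_div_le_log_sum
      (fun i => hu.nonneg i j) (hu.sum_col j) (fun i => mul_nonneg (hw i).1.le (ha i j))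
      fun i h => mul_pos (hw i).1 (hu.pos_of_ne_zero i j h)
    rcases eq_or_ne (u i j) 0 with h | h
    · simp [h]
    · rw [mul_div_assoc, log_mul (hw i).1.ne'
        (div_pos (hu.pos_of_ne_zero i j h) ((hu.nonneg i j).lt_of_ne' h)).ne', mul_add]
  have hrow : ∑ i, (σ - ∑ j, u i j) * log (w i) ≤ (σ - σ') * log (w i₀) := by
    have hnonpos : ∀ i, (σ - ∑ j, u i j) * log (w i) ≤ 0 := fun i =>
      mul_nonpos_of_nonneg_of_nonpos (by linarith [hu.sum_row_le i]) (hlog i)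
    rw [← add_sum_erase _ _ (mem_univ i₀)]
    nlinarith [sum_nonpos fun i (_ : i ∈ univ.erase i₀) => hnonpos i, hu.sum_row_le i₀, hlog i₀]
  have hexpand : σ * ∑ i, log (w i) -
      ∑ j, (∑ i, u i j * log (w i) + ∑ i, u i j * log (a i j / u i j)) =
      -∑ j, ∑ i, u i j * log (a i j / u i j) + ∑ i, (σ - ∑ j, u i j) * log (w i) := by
    simp only [sum_add_distrib, sub_mul, sum_sub_distrib, mul_sum, sum_mul]
    rw [sum_comm (f := fun j i => u i j * log (w i))]
    ring
  have := sum_le_sum fun j (_ : j ∈ univ) => hcol j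
  rw [scalingPotential]
  linarith

theorem continuousOn_scalingPotential (ha : ∀ i j, 0 ≤ a i j) (hacol : ∀ j, ∃ i, a i j ≠ 0)
    (σ : ℝ) : ContinuousOn (scalingPotential σ a) {w | ∀ i, 0 < w i} := by
  refine (continuousOn_const.mul (continuousOn_finsetSum _ fun i _ => ?_)).sub
    (continuousOn_finsetSum _ fun j _ => ?_)
  · exact (continuous_apply i).continuousOn.log fun w hw => (hw i).ne'
  · have : Continuous fun w => weightedColSum a w j := by unfold weightedColSum; fun_prop
    exact this.continuousOn.log fun w hw => (weightedColSum_pos ha hw (hacol j)).ne'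

theorem exists_isMaxOn_scalingPotential {u : ι → κ → ℝ} {σ σ' : ℝ} (ha : ∀ i j, 0 ≤ a i j)
    (hu : IsScalingCertificate a u σ') (hσ : σ' < σ) :
    ∃ w ∈ Set.univ.pi fun _ => Set.Ioc 0 1,
      IsMaxOn (scalingPotential σ a) (Set.univ.pi fun _ => Set.Ioc 0 1) w := by
  set C := -∑ j, ∑ i, u i j * log (a i j / u i j)
  set G₁ := scalingPotential σ a 1
  set δ := min 1 (exp ((G₁ - C) / (σ - σ')))
  have hδ : 0 < δ := lt_min one_pos (exp_pos _)
  -- `δ` is chosen so that, by `scalingPotential_le`, a weight below `δ` pushes the potential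
  -- below its value `G₁` at the all-ones vector.
  have hsmall : ∀ w ∈ Set.univ.pi (fun _ => Set.Ioc (0 : ℝ) 1), ∀ i, w i < δ →
      scalingPotential σ a w < G₁ := by
    intro w hw i hi
    have hlog : log (w i) < (G₁ - C) / (σ - σ') :=
      (log_lt_log (hw i trivial).1 (hi.trans_le (min_le_right _ _))).trans_eq (log_exp _)
    have := scalingPotential_le ha hu hσ.le (fun i => hw i trivial) i
    rw [lt_div_iff₀ (sub_pos.2 hσ)] at hlog
    linarith
  set K : Set (ι → ℝ) := Set.Icc (fun _ => δ) 1
  have h1K : (1 : ι → ℝ) ∈ K := ⟨fun _ => min_le_left _ _, le_rfl⟩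
  have hK : K ⊆ Set.univ.pi fun _ => Set.Ioc 0 1 :=
    fun w hw i _ => ⟨hδ.trans_le (hw.1 i), hw.2 i⟩
  obtain ⟨w, hwK, hmax⟩ := isCompact_Icc.exists_isMaxOn ⟨1, h1K⟩
    ((continuousOn_scalingPotential ha hu.exists_ne_zero σ).mono fun w hw i => (hK hw i trivial).1)
  refine ⟨w, hK hwK, fun w' hw' => ?_⟩
  by_cases hw'K : w' ∈ K
  · exact hmax hw'K
  · obtain ⟨i, hi⟩ : ∃ i, w' i < δ := by
      by_contra! h
      exact hw'K ⟨h, fun i => (hw' i trivial).2⟩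
    exact (hsmall w' hw' i hi).le.trans (hmax h1K)

theorem hasDerivAt_scalingPotential_update [DecidableEq ι] (ha : ∀ i j, 0 ≤ a i j)
    (hacol : ∀ j, ∃ i, a i j ≠ 0) (σ : ℝ) {w : ι → ℝ} (hw : ∀ i, 0 < w i) (i₀ : ι) :
    HasDerivAt (fun x => scalingPotential σ a (Function.update w i₀ x))
      (σ / w i₀ - ∑ j, a i₀ j / weightedColSum a w j) (w i₀) := by
  have hupd : ∀ i, HasDerivAt (fun x => Function.update w i₀ x i)
      ((Pi.single i₀ 1 : ι → ℝ) i) (w i₀) := by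
    intro i
    rcases eq_or_ne i i₀ with rfl | h
    · simpa using hasDerivAt_id' _
    · simpa [h] using hasDerivAt_const _ _
  have hlog : HasDerivAt (fun x => ∑ i, log (Function.update w i₀ x i)) (1 / w i₀) (w i₀) := by
    refine (HasDerivAt.fun_sum fun i _ =>
      (hupd i).log (by rw [Function.update_eq_self]; exact (hw i).ne')).congr_deriv ?_
    simp [Pi.single_apply, ite_div]
  have hcol : ∀ j, HasDerivAt (fun x => log (weightedColSum a (Function.update w i₀ x) j))
      (a i₀ j / weightedColSum a w j) (w i₀) := by
    intro j
    have hsum : HasDerivAt (fun x => weightedColSum a (Function.update w i₀ x) j) (a i₀ j)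
        (w i₀) := by
      refine (HasDerivAt.fun_sum fun i _ => (hupd i).mul_const (a i j)).congr_deriv ?_
      simp [Pi.single_apply]
    simpa using hsum.log (by simpa using (weightedColSum_pos ha hw (hacol j)).ne')
  exact ((hlog.const_mul σ).sub (HasDerivAt.fun_sum fun j _ => hcol j)).congr_deriv (by ring)

theorem sum_colNormalize_le_of_isMaxOn (ha : ∀ i j, 0 ≤ a i j) (hacol : ∀ j, ∃ i, a i j ≠ 0)
    {σ : ℝ} {w : ι → ℝ} (hw : w ∈ Set.univ.pi fun _ => Set.Ioc 0 1)
    (hmax : IsMaxOn (scalingPotential σ a) (Set.univ.pi fun _ => Set.Ioc 0 1) w) (i₀ : ι) :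
    ∑ j, colNormalize a w i₀ j ≤ σ := by
  classical
  have hw₀ : ∀ i, 0 < w i := fun i => (hw i trivial).1
  have hleft : ∀ᶠ x in 𝓝[<] w i₀, scalingPotential σ a (Function.update w i₀ x) ≤
      scalingPotential σ a (Function.update w i₀ (w i₀)) := by
    filter_upwards [Ioo_mem_nhdsLT (hw₀ i₀)] with x hx
    rw [Function.update_eq_self]
    refine hmax fun i _ => ?_
    rcases eq_or_ne i i₀ with rfl | h
    · simpa using ⟨hx.1, hx.2.le.trans (hw i trivial).2⟩
    · simpa [h] using hw i trivial
  have hderiv :=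
    (hasDerivAt_scalingPotential_update ha hacol σ hw₀ i₀).nonneg_of_eventually_le hleft
  calc ∑ j, colNormalize a w i₀ j = w i₀ * ∑ j, a i₀ j / weightedColSum a w j := by
        simp only [colNormalize, mul_sum, mul_div_assoc]
    _ ≤ w i₀ * (σ / w i₀) := mul_le_mul_of_nonneg_left (by linarith) (hw₀ i₀).le
    _ = σ := mul_div_cancel₀ σ (hw₀ i₀).ne'

theorem exists_rowScaling {u : ι → κ → ℝ} {σ σ' : ℝ} (ha : ∀ i j, 0 ≤ a i j)
    (hu : IsScalingCertificate a u σ') (hσ : σ' < σ) :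
    ∃ w : ι → ℝ, (∀ i, 0 < w i) ∧ ∀ i, ∑ j, colNormalize a w i j ≤ σ := by
  obtain ⟨w, hw, hmax⟩ := exists_isMaxOn_scalingPotential ha hu hσ
  exact ⟨w, fun i => (hw i trivial).1,
    sum_colNormalize_le_of_isMaxOn ha hu.exists_ne_zero hw hmax⟩

end Scaling

section Design

variable {ι κ R : Type*} [Fintype ι] [Zero R] [DecidableEq R]

def Matrix.colSupport (A : Matrix ι κ R) (j : κ) : Finset ι := {i | A i j ≠ 0}

theorem Matrix.coe_colSupport (A : Matrix ι κ R) (j : κ) :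
    (A.colSupport j : Set ι) = {i | A i j ≠ 0} := by
  ext; simp [colSupport]

variable [Fintype κ]

def Matrix.rowSupport (A : Matrix ι κ R) (i : ι) : Finset κ := {j | A i j ≠ 0}

variable [DecidableEq ι] {A : Matrix ι κ R} {k t : ℕ}

theorem sum_card_rowSupport_eq (j : κ) :
    ∑ i ∈ A.colSupport j, #(A.rowSupport i) = ∑ j', #(A.colSupport j ∩ A.colSupport j') := by
  simp only [rowSupport, card_filter]
  rw [sum_comm]
  refine sum_congr rfl fun j' _ => ?_
  rw [← card_filter]
  congr 1
  ext i
  simp [colSupport]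

theorem sum_card_rowSupport_le
    (hint : ∀ j j', j ≠ j' → #(A.colSupport j ∩ A.colSupport j') ≤ t) (j : κ) :
    ∑ i ∈ A.colSupport j, #(A.rowSupport i) ≤ #(A.colSupport j) + Fintype.card κ * t := by
  classical
  rw [sum_card_rowSupport_eq, ← add_sum_erase _ _ (mem_univ j), inter_self]
  gcongr
  calc ∑ j' ∈ univ.erase j, #(A.colSupport j ∩ A.colSupport j')
      ≤ ∑ j' ∈ univ.erase j, t := sum_le_sum fun j' hj' => hint j j' (ne_of_mem_erase hj').symm
    _ ≤ Fintype.card κ * t := by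
        rw [sum_const, smul_eq_mul]
        exact Nat.mul_le_mul_right _ ((card_erase_le).trans_eq (card_univ))

noncomputable def Matrix.colMass (A : Matrix ι κ R) (j : κ) : ℝ :=
  ∑ i ∈ A.colSupport j, (#(A.rowSupport i) : ℝ)⁻¹

theorem le_colMass (hcol : ∀ j, k ≤ #(A.colSupport j))
    (hint : ∀ j j', j ≠ j' → #(A.colSupport j ∩ A.colSupport j') ≤ t) (j : κ) :
    (k : ℝ) ^ 2 / (k + Fintype.card κ * t) ≤ A.colMass j := by
  set s := #(A.colSupport j)
  have hpos : ∀ i ∈ A.colSupport j, (0 : ℝ) < #(A.rowSupport i) := fun i hi => by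
    simp only [Nat.cast_pos, card_pos]
    exact ⟨j, by simpa [rowSupport, colSupport] using hi⟩
  have htitu : (s : ℝ) ^ 2 / ∑ i ∈ A.colSupport j, (#(A.rowSupport i) : ℝ) ≤ A.colMass j := by
    simpa [colMass, s] using sq_sum_div_le_sum_sq_div (A.colSupport j) (fun _ => (1 : ℝ)) hpos
  have hsum : ∑ i ∈ A.colSupport j, (#(A.rowSupport i) : ℝ) ≤ s + Fintype.card κ * t := by
    exact_mod_cast sum_card_rowSupport_le hint j
  have hks : (k : ℝ) ≤ s := by exact_mod_cast hcol j
  rcases (Nat.zero_le k).eq_or_lt with hk | hk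
  · rw [← hk]
    simpa [colMass] using sum_nonneg fun i hi => (inv_pos.2 (hpos i hi)).le
  have hk' : (0 : ℝ) < k := by exact_mod_cast hk
  have hdeg : 0 < ∑ i ∈ A.colSupport j, (#(A.rowSupport i) : ℝ) :=
    sum_pos hpos (card_pos.1 (hk.trans_le (hcol j)))
  calc (k : ℝ) ^ 2 / (k + Fintype.card κ * t) ≤ s ^ 2 / (s + Fintype.card κ * t) := by
        have hN : (0 : ℝ) ≤ Fintype.card κ * t := by positivity
        rw [div_le_div_iff₀ (by positivity) (by linarith)]
        nlinarith [mul_le_mul_of_nonneg_right (pow_le_pow_left₀ hk'.le hks 2) hN,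
          mul_nonneg (mul_nonneg hk'.le (hk'.le.trans hks)) (sub_nonneg.2 hks)]
    _ ≤ s ^ 2 / ∑ i ∈ A.colSupport j, (#(A.rowSupport i) : ℝ) :=
        div_le_div_of_nonneg_left (by positivity) hdeg hsum
    _ ≤ A.colMass j := htitu

noncomputable def Matrix.fractionalScaling (A : Matrix ι κ R) (i : ι) (j : κ) : ℝ :=
  if i ∈ A.colSupport j then ((#(A.rowSupport i) : ℝ) * A.colMass j)⁻¹ else 0

theorem sum_fractionalScaling_col {j : κ} (hj : A.colMass j ≠ 0) :
    ∑ i, A.fractionalScaling i j = 1 := by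
  simp only [fractionalScaling, sum_ite_mem, univ_inter, mul_inv, ← sum_mul]
  exact mul_inv_cancel₀ hj

theorem sum_fractionalScaling_row_le {c : ℝ} (hc : 0 < c) (hmass : ∀ j, c ≤ A.colMass j)
    (i : ι) : ∑ j, A.fractionalScaling i j ≤ c⁻¹ := by
  have hrow : ∑ j, A.fractionalScaling i j =
      ∑ j ∈ A.rowSupport i, ((#(A.rowSupport i) : ℝ) * A.colMass j)⁻¹ := by
    rw [rowSupport, sum_filter]
    exact sum_congr rfl fun j _ => by simp [fractionalScaling, colSupport, rowSupport]
  calc ∑ j, A.fractionalScaling i j ≤ ∑ j ∈ A.rowSupport i, (#(A.rowSupport i) : ℝ)⁻¹ * c⁻¹ := by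
        rw [hrow]
        gcongr with j
        rw [mul_inv]
        exact mul_le_mul_of_nonneg_left (inv_anti₀ hc (hmass j)) (by positivity)
    _ ≤ c⁻¹ := by
        rw [sum_const, nsmul_eq_mul, ← mul_assoc]
        exact mul_le_of_le_one_left (by positivity) mul_inv_le_one

theorem isScalingCertificate_fractionalScaling {a : ι → κ → ℝ} (ha : ∀ i j, A i j ≠ 0 → 0 < a i j)
    (hk : 0 < k) (hcol : ∀ j, k ≤ #(A.colSupport j))
    (hint : ∀ j j', j ≠ j' → #(A.colSupport j ∩ A.colSupport j') ≤ t) :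
    IsScalingCertificate a A.fractionalScaling ((k + Fintype.card κ * t) / k ^ 2) := by
  have hc : (0 : ℝ) < k ^ 2 / (k + Fintype.card κ * t) := by positivity
  have hmass : ∀ j, 0 < A.colMass j := fun j => hc.trans_le (le_colMass hcol hint j)
  refine ⟨fun i j => ?_, fun i j h => ha i j ?_, fun j => sum_fractionalScaling_col (hmass j).ne',
    fun i => ?_⟩
  · unfold fractionalScaling
    split_ifs
    · exact inv_nonneg.2 (mul_nonneg (Nat.cast_nonneg _) (hmass j).le)
    · exact le_rfl
  · contrapose! h
    simp [fractionalScaling, colSupport, h]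
  · simpa [inv_div] using sum_fractionalScaling_row_le hc (le_colMass hcol hint) i

end Design

section Balancing

variable {𝕜 ι κ : Type*} [RCLike 𝕜] [Fintype ι] [Fintype κ]

theorem exists_balanced_scaling (A : Matrix ι κ 𝕜) {u : ι → κ → ℝ} {σ σ' : ℝ}
    (hu : IsScalingCertificate (fun i j => ‖A i j‖ ^ 2) u σ') (hσ : σ' < σ) :
    ∃ B : Matrix ι κ 𝕜, B.rank ≤ A.rank ∧ (∀ i j, B i j = 0 ↔ A i j = 0) ∧
      (∀ j, ∑ i, ‖B i j‖ ^ 2 = 1) ∧ ∀ i, ∑ j, ‖B i j‖ ^ 2 ≤ σ := by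
  classical
  set a : ι → κ → ℝ := fun i j => ‖A i j‖ ^ 2
  have ha : ∀ i j, 0 ≤ a i j := fun i j => by positivity
  obtain ⟨w, hw, hrow⟩ := exists_rowScaling ha hu hσ
  have hc : ∀ j, 0 < weightedColSum a w j := fun j => weightedColSum_pos ha hw (hu.exists_ne_zero j)
  set B : Matrix ι κ 𝕜 :=
    diagonal (fun i => (√(w i) : 𝕜)) * A * diagonal fun j => ((√(weightedColSum a w j))⁻¹ : 𝕜)
  have hB : ∀ i j, B i j = (√(w i) : 𝕜) * A i j * ((√(weightedColSum a w j))⁻¹ : 𝕜) := by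
    simp [B]
  have hnorm : ∀ i j, ‖B i j‖ ^ 2 = colNormalize a w i j := fun i j => by
    rw [hB, colNormalize]
    simp [norm_mul, mul_pow, Real.sq_sqrt (hw i).le, Real.sq_sqrt (hc j).le, a]
    ring
  refine ⟨B, (rank_mul_le_left _ _).trans (rank_mul_le_right _ _), fun i j => ?_,
    fun j => ?_, fun i => ?_⟩
  · simp [hB, (Real.sqrt_pos.2 (hw i)).ne', (Real.sqrt_pos.2 (hc j)).ne']
  · simpa only [hnorm] using sum_colNormalize_eq_one (hc j)
  · simpa only [hnorm] using hrow i

theorem card_sub_le_rank_of_design (A : Matrix ι κ 𝕜) {k t : ℕ} (hk : 0 < k)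
    (hkt : k ≤ Fintype.card κ * t) (hcol : ∀ j, k ≤ {i | A i j ≠ 0}.ncard)
    (hint : ∀ j j', j ≠ j' → ({i | A i j ≠ 0} ∩ {i | A i j' ≠ 0}).ncard ≤ t) :
    (Fintype.card κ : ℝ) - 6 * Fintype.card κ ^ 3 * t ^ 3 / k ^ 3 ≤ A.rank := by
  classical
  set n : ℝ := (Fintype.card κ : ℝ)
  have hcol' : ∀ j, k ≤ #(A.colSupport j) := fun j =>
    (hcol j).trans_eq (by rw [← Set.ncard_coe_finset, coe_colSupport])
  have hint' : ∀ j j', j ≠ j' → #(A.colSupport j ∩ A.colSupport j') ≤ t := fun j j' h => by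
    rw [← Set.ncard_coe_finset, coe_inter, coe_colSupport, coe_colSupport]
    exact hint j j' h
  have hu := isScalingCertificate_fractionalScaling (a := fun i j => ‖A i j‖ ^ 2)
    (fun i j h => by positivity) hk hcol' hint'
  set σ : ℝ := 6 * n ^ 2 * t ^ 2 / k ^ 3
  have hσ : (k + n * t) / (k : ℝ) ^ 2 < σ := by
    have hk' : (1 : ℝ) ≤ k := by exact_mod_cast hk
    have hkt' : (k : ℝ) ≤ n * t := by simp only [n]; exact_mod_cast hkt
    have : (k + n * t) * k < 6 * n ^ 2 * t ^ 2 := by nlinarith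
    rw [div_lt_div_iff₀ (by positivity) (by positivity)]
    nlinarith [mul_lt_mul_of_pos_right this (by positivity : (0 : ℝ) < k ^ 2)]
  obtain ⟨B, hrank, hzero, hBcol, hBrow⟩ := exists_balanced_scaling A hu hσ
  have hBint : ∀ j j', j ≠ j' → ({i | B i j ≠ 0} ∩ {i | B i j' ≠ 0}).ncard ≤ t := by
    simpa only [ne_eq, hzero] using hint
  calc n - 6 * n ^ 3 * t ^ 3 / k ^ 3 = n - t * σ * n := by ring
    _ ≤ B.rank := card_sub_le_rank_of_unit_columns B hBcol hBrow hBint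
    _ ≤ A.rank := by exact_mod_cast hrank

end Balancing

theorem rank_of_design_matrix_average_q_no_m {m n q k t : ℕ} (hk : 0 < k) (hkt : k ≤ n * t)
    (A : Matrix (Fin m) (Fin n) ℂ) (hA : IsDesignMatrix A q k t) :
    (n : ℝ) - 6 * (n : ℝ) ^ 3 * (t : ℝ) ^ 3 / (k : ℝ) ^ 3 ≤ (A.rank : ℝ) := by
  simpa using card_sub_le_rank_of_design A hk (by simpa using hkt) hA.2.1 hA.2.2
end

section
/- Let M be an n × n Hermitian complex matrix such that M_{ii} ≥ L for every i ∈ [n], where L > 0 is a positive real number. Then rank(M) ≥ n²L² / (nL² + Σ_{i≠j} |M_{ij}|²). -/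
/-!
Rescale `M` to `N = D^{-1/2} M D^{-1/2}`, `D = diag(M)`: `N` is Hermitian of the same rank with
unit diagonal, and `|N_ij|² ≤ |M_ij|² / L²`. For a Hermitian `N` with eigenvalues `λ`,
Cauchy–Schwarz over the `rank N` nonzero eigenvalues gives
`(tr N)² = (∑ λ)² ≤ rank N · ∑ λ² = rank N · ∑_{i,j} |N_ij|²`, i.e.
`n² ≤ rank M · (n + ∑_{i≠j} |N_ij|²) ≤ rank M · (n + ∑_{i≠j} |M_ij|² / L²)`.
-/

open Finset Matrix

theorem Finset.sum_sum_eq_sum_diag_add_sum_filter_ne {ι M : Type*} [Fintype ι] [DecidableEq ι]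
    [AddCommMonoid M] (f : ι → ι → M) :
    ∑ i, ∑ j, f i j = ∑ i, f i i + ∑ p ∈ univ.filter (fun p : ι × ι => p.1 ≠ p.2), f p.1 p.2 := by
  rw [← Fintype.sum_prod_type', ← sum_filter_add_sum_filter_not univ (fun p : ι × ι => p.1 = p.2)]
  congr 1
  simp [sum_filter, Fintype.sum_prod_type]

theorem sq_sum_le_card_filter_ne_zero_mul_sum_sq {ι : Type*} [Fintype ι] (f : ι → ℝ) :
    (∑ i, f i) ^ 2 ≤ #{i | f i ≠ 0} * ∑ i, f i ^ 2 := by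
  classical
  calc (∑ i, f i) ^ 2 = (∑ i with f i ≠ 0, f i) ^ 2 := by rw [sum_filter_ne_zero]
    _ ≤ #{i | f i ≠ 0} * ∑ i with f i ≠ 0, f i ^ 2 := sq_sum_le_card_mul_sum_sq
    _ ≤ #{i | f i ≠ 0} * ∑ i, f i ^ 2 :=
      mul_le_mul_of_nonneg_left (sum_le_univ_sum_of_nonneg fun i => sq_nonneg (f i)) (by positivity)

theorem Matrix.trace_conjStarAlgAut {R n : Type*} [CommRing R] [StarRing R] [Fintype n]
    [DecidableEq n] (u : unitary (Matrix n n R)) (X : Matrix n n R) :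
    (Unitary.conjStarAlgAut R _ u X).trace = X.trace := by
  rw [Unitary.conjStarAlgAut_apply, trace_mul_cycle, Unitary.coe_star_mul_self, one_mul]

variable {𝕜 n : Type*} [RCLike 𝕜] [Fintype n]

theorem Matrix.re_trace_conjTranspose_mul_self (A : Matrix n n 𝕜) :
    RCLike.re (Aᴴ * A).trace = ∑ i, ∑ j, ‖A i j‖ ^ 2 := by
  simp only [trace, diag_apply, mul_apply, conjTranspose_apply, RCLike.star_def, RCLike.conj_mul,
    map_sum]
  rw [sum_comm]
  simp only [← RCLike.ofReal_pow, RCLike.ofReal_re]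

namespace Matrix.IsHermitian

variable [DecidableEq n] {A : Matrix n n 𝕜}

theorem sum_norm_sq_eq_sum_eigenvalues_sq (hA : A.IsHermitian) :
    ∑ i, ∑ j, ‖A i j‖ ^ 2 = ∑ i, hA.eigenvalues i ^ 2 := by
  have hsq : A * A = Unitary.conjStarAlgAut 𝕜 _ hA.eigenvectorUnitary
      (diagonal (RCLike.ofReal ∘ hA.eigenvalues) * diagonal (RCLike.ofReal ∘ hA.eigenvalues)) := by
    rw [map_mul, ← hA.spectral_theorem]
  rw [← re_trace_conjTranspose_mul_self, hA.eq, hsq, trace_conjStarAlgAut, diagonal_mul_diagonal,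
    trace_diagonal, map_sum]
  simp only [Function.comp_apply, ← RCLike.ofReal_mul, RCLike.ofReal_re, sq]

theorem re_trace_sq_le_rank_mul_sum_norm_sq (hA : A.IsHermitian) :
    RCLike.re A.trace ^ 2 ≤ A.rank * ∑ i, ∑ j, ‖A i j‖ ^ 2 := by
  have htrace : RCLike.re A.trace = ∑ i, hA.eigenvalues i := by
    simp [hA.trace_eq_sum_eigenvalues]
  rw [htrace, hA.sum_norm_sq_eq_sum_eigenvalues_sq, hA.rank_eq_card_non_zero_eigs,
    Fintype.card_subtype]
  exact sq_sum_le_card_filter_ne_zero_mul_sum_sq _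

theorem card_sq_le_rank_mul_of_apply_self_eq_one (hA : A.IsHermitian) (hdiag : ∀ i, A i i = 1) :
    (Fintype.card n : ℝ) ^ 2 ≤
      A.rank * (Fintype.card n + ∑ p ∈ univ.filter (fun p : n × n => p.1 ≠ p.2), ‖A p.1 p.2‖ ^ 2) := by
  have htrace : RCLike.re A.trace = Fintype.card n := by
    simp [trace, hdiag]
  have hnorm := sum_sum_eq_sum_diag_add_sum_filter_ne fun i j => ‖A i j‖ ^ 2
  simp only [hdiag, norm_one, one_pow, sum_const, card_univ, nsmul_eq_mul, mul_one] at hnorm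
  rw [← hnorm, ← htrace]
  exact hA.re_trace_sq_le_rank_mul_sum_norm_sq

end Matrix.IsHermitian

namespace Matrix

variable [DecidableEq n]

noncomputable def normalizeDiag (M : Matrix n n 𝕜) : Matrix n n 𝕜 :=
  let d : n → 𝕜 := fun i => ((√(RCLike.re (M i i)))⁻¹ : ℝ)
  diagonal d * M * diagonal d

variable {M : Matrix n n 𝕜}

theorem normalizeDiag_apply (i j : n) :
    M.normalizeDiag i j =
      ((√(RCLike.re (M i i)))⁻¹ : ℝ) * M i j * ((√(RCLike.re (M j j)))⁻¹ : ℝ) := by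
  simp [normalizeDiag, diagonal_mul, mul_diagonal]

theorem norm_normalizeDiag_apply (i j : n) :
    ‖M.normalizeDiag i j‖ = ‖M i j‖ / (√(RCLike.re (M i i)) * √(RCLike.re (M j j))) := by
  rw [normalizeDiag_apply, norm_mul, norm_mul, RCLike.norm_ofReal, RCLike.norm_ofReal,
    abs_of_nonneg (by positivity), abs_of_nonneg (by positivity)]
  field_simp

theorem IsHermitian.normalizeDiag (hM : M.IsHermitian) : M.normalizeDiag.IsHermitian := by
  ext i j
  simp only [conjTranspose_apply, normalizeDiag_apply, star_mul', RCLike.star_def,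
    RCLike.conj_ofReal, ← hM.apply i j]
  ring

theorem IsHermitian.normalizeDiag_apply_self (hM : M.IsHermitian) {i : n}
    (hi : 0 < RCLike.re (M i i)) : M.normalizeDiag i i = 1 := by
  have hre : M i i = (RCLike.re (M i i) : 𝕜) := (hM.coe_re_apply_self i).symm
  rw [normalizeDiag_apply]
  set r := RCLike.re (M i i)
  rw [hre, ← RCLike.ofReal_mul, ← RCLike.ofReal_mul, ← RCLike.ofReal_one, RCLike.ofReal_inj]
  have hs : √r ≠ 0 := Real.sqrt_ne_zero'.mpr hi
  field_simp
  exact (Real.sq_sqrt hi.le).symm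

theorem rank_normalizeDiag (h : ∀ i, 0 < RCLike.re (M i i)) :
    M.normalizeDiag.rank = M.rank := by
  have hdet : IsUnit (diagonal fun i => (((√(RCLike.re (M i i)))⁻¹ : ℝ) : 𝕜)).det := by
    simp [Real.sqrt_ne_zero', h, Finset.prod_ne_zero_iff]
  rw [normalizeDiag, rank_mul_eq_left_of_isUnit_det _ _ hdet,
    rank_mul_eq_right_of_isUnit_det _ _ hdet]

theorem norm_normalizeDiag_apply_mul_le {L : ℝ} (hL : 0 ≤ L) (h : ∀ i, L ≤ RCLike.re (M i i))
    (i j : n) : ‖M.normalizeDiag i j‖ * L ≤ ‖M i j‖ := by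
  have hsqrt : L ≤ √(RCLike.re (M i i)) * √(RCLike.re (M j j)) := by
    calc L = √L * √L := (Real.mul_self_sqrt hL).symm
      _ ≤ _ := mul_le_mul (Real.sqrt_le_sqrt (h i)) (Real.sqrt_le_sqrt (h j)) (by positivity)
        (by positivity)
  rw [norm_normalizeDiag_apply, div_mul_eq_mul_div, mul_div_assoc]
  exact mul_le_of_le_one_right (norm_nonneg _) (div_le_one_of_le₀ hsqrt (by positivity))

end Matrix

theorem rank_of_diagonal_dominant {n : ℕ} (M : Matrix (Fin n) (Fin n) ℂ)
    (hM : M.IsHermitian) (L : ℝ) (hL : 0 < L) (hdiag : ∀ i : Fin n, L ≤ (M i i).re) :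
    (n : ℝ) ^ 2 * L ^ 2 /
        ((n : ℝ) * L ^ 2 +
          ∑ p ∈ Finset.univ.filter (fun p : Fin n × Fin n => p.1 ≠ p.2),
            ‖M p.1 p.2‖ ^ 2) ≤ (M.rank : ℝ) := by
  have hpos : ∀ i, 0 < (M i i).re := fun i => hL.trans_le (hdiag i)
  have hunit := hM.normalizeDiag.card_sq_le_rank_mul_of_apply_self_eq_one
    fun i => hM.normalizeDiag_apply_self (hpos i)
  rw [Fintype.card_fin, rank_normalizeDiag hpos] at hunit
  have hoff : (∑ p ∈ univ.filter (fun p : Fin n × Fin n => p.1 ≠ p.2),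
      ‖M.normalizeDiag p.1 p.2‖ ^ 2) * L ^ 2 ≤
      ∑ p ∈ univ.filter (fun p : Fin n × Fin n => p.1 ≠ p.2), ‖M p.1 p.2‖ ^ 2 := by
    rw [sum_mul]
    refine sum_le_sum fun p _ => ?_
    rw [← mul_pow]
    exact pow_le_pow_left₀ (by positivity) (norm_normalizeDiag_apply_mul_le hL.le hdiag _ _) 2
  refine div_le_of_le_mul₀ (by positivity) (Nat.cast_nonneg _) ?_
  linarith [mul_le_mul_of_nonneg_right hunit (sq_nonneg L),
    mul_le_mul_of_nonneg_left hoff (Nat.cast_nonneg (α := ℝ) M.rank)]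
end
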